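/- Let β ∈ (1,2) and α ∈ (0,2−β). Then I(β,α) = (0,2−β) if and only if β is a multinacci number, i.e. β^k = β^{k−1} + β^{k−2} + ⋯ + β + 1 for some integer k ≥ 2. -/

import Mathlib

noncomputable section

/-- The upper intermediate β-transformation `T⁺_{β,α}` on `[0,1]`. -/
def Tpos (β α : ℝ) (x : ℝ) : ℝ :=
  if x = (1 - α) / β then 0 else Int.fract (β * x + α)

/-- The lower intermediate β-transformation `T⁻_{β,α}` on `[0,1]`. -/
def Tneg (β α : ℝ) (x : ℝ) : ℝ :=
  if x = (1 - α) / β then 1 else Int.fract (β * x + α)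

/-- The itinerary `τ⁺_{β,α}(x)`: index `n` (from 0) is the `(n+1)`-st entry;
entry is `false` (i.e. 0) iff the `n`-th iterate is `< c`. -/
def tauPos (β α x : ℝ) : ℕ → Bool :=
  fun n => if (Tpos β α)^[n] x < (1 - α) / β then false else true

/-- The itinerary `τ⁻_{β,α}(x)`: entry is `false` (i.e. 0) iff the iterate is `≤ c`. -/
def tauNeg (β α x : ℝ) : ℕ → Bool :=
  fun n => if (Tneg β α)^[n] x ≤ (1 - α) / β then false else true

/-- The kneading invariant `k₊` of `(β,α)`. -/
def kPlus (β α : ℝ) : ℕ → Bool := tauPos β α ((1 - α) / β)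

/-- The kneading invariant `k₋` of `(β,α)`. -/
def kMinus (β α : ℝ) : ℕ → Bool := tauNeg β α ((1 - α) / β)

/-- The kneading space `Ω_{β,α}`. -/
def OmegaSet (β α : ℝ) : Set (ℕ → Bool) :=
  (tauPos β α '' Set.Icc 0 1) ∪ (tauNeg β α '' Set.Icc 0 1)

/-- `Ω` is a subshift of finite type: there is a finite set of finite forbidden words
such that `Ω` is exactly the set of sequences avoiding them. -/
def IsSFT (Ω : Set (ℕ → Bool)) : Prop :=
  ∃ F : Finset (List Bool),
    Ω = {ω | ∀ m n : ℕ, List.ofFn (fun i : Fin n => ω (m + i)) ∉ F}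

/-- `T_{β,α}` has matching. -/
def HasMatching (β α : ℝ) : Prop :=
  ∃ n : ℕ, (Tpos β α)^[n] 0 = (Tneg β α)^[n] 1

/-- The matching time: the smallest `n` with `(T⁺)ⁿ(0) = (T⁻)ⁿ(1)`. -/
def matchingTime (β α : ℝ) : ℕ :=
  sInf {n : ℕ | (Tpos β α)^[n] 0 = (Tneg β α)^[n] 1}

/-- `T_{β,α}` and `T_{β,α'}` have the same matching: both have matching, with the same
matching time `n`, and their kneading invariants agree in the first `n+1` entries. -/
def SameMatching (β α α' : ℝ) : Prop :=
  HasMatching β α ∧ HasMatching β α' ∧ matchingTime β α = matchingTime β α' ∧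
    ∀ i ≤ matchingTime β α, kPlus β α i = kPlus β α' i ∧ kMinus β α i = kMinus β α' i

/-- The matching set `I(β,α)` (a subset of `(0, 2-β)`). -/
def matchInterval (β α : ℝ) : Set ℝ :=
  {α' | α' ∈ Set.Ioo (0 : ℝ) (2 - β) ∧ SameMatching β α α'}

/-- The parameter region `Δ`. -/
def DeltaSet : Set (ℝ × ℝ) :=
  {p | p.1 ∈ Set.Ioo (1 : ℝ) 2 ∧ p.2 ∈ Set.Ioo (0 : ℝ) (2 - p.1)}

/-- A sequence in `{0,1}^ℕ` is periodic. -/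
def IsPeriodicSeq (ω : ℕ → Bool) : Prop :=
  ∃ p : ℕ, 1 ≤ p ∧ ∀ n, ω (n + p) = ω n

/-- A sequence in `{0,1}^ℕ` is eventually periodic. -/
def IsEvPeriodicSeq (ω : ℕ → Bool) : Prop :=
  ∃ k : ℕ, IsPeriodicSeq (fun n => ω (n + k))

/-- Strict lexicographic order on `{0,1}^ℕ`: at the first index where they differ,
`ω` has entry 0 and `ν` has entry 1. -/
def lexLt (ω ν : ℕ → Bool) : Prop :=
  ∃ n : ℕ, (∀ m < n, ω m = ν m) ∧ ω n = false ∧ ν n = true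

/-!
Write `Sⱼ = 1 + β + ⋯ + βʲ⁻¹`. As long as the digits of the kneading invariants are `0` for `k₊`
and `1` for `k₋`, the orbits of `0` under `T⁺` and of `1` under `T⁻` obey the affine recursions
`x ↦ βx + α` and `x ↦ βx + α - 1`, so `(T⁺)ʲ 0 = α Sⱼ` and `(T⁻)ʲ 1 = 1 - (2 - β - α) Sⱼ`.
These meet exactly when `(2 - β) Sⱼ = 1`, which is the multinacci equation `βʲ = Sⱼ`.

If `(2 - β) Sₖ = 1`, then for every `α ∈ (0, 2 - β)` and `j ≤ k` both `α Sⱼ` and `(2 - β - α) Sⱼ`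
are `< (2 - β) Sₖ = 1`, so every such `α` has matching time `k` and the same kneading prefixes.
Conversely, if `I(β,α)` is the whole interval, all parameters share the digits up to the
matching time; testing parameters close to `0` and to `2 - β` shows that these digits are
`0` for `k₊` and `1` for `k₋`, so the closed forms hold up to the matching time `n`, and
matching at `n` is the equation `(2 - β) Sₙ = 1`.
-/

def geomSum (β : ℝ) (j : ℕ) : ℝ := ∑ i ∈ Finset.range j, β ^ i

def lowerOrbit (β a : ℝ) (j : ℕ) : ℝ := a * geomSum β j

def upperOrbit (β a : ℝ) (j : ℕ) : ℝ := 1 - (2 - β - a) * geomSum β j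

def GeomOrbits (β a : ℝ) (j : ℕ) : Prop :=
  (Tpos β a)^[j] 0 = lowerOrbit β a j ∧ (Tneg β a)^[j] 1 = upperOrbit β a j

variable {β a α : ℝ} {j k : ℕ}

lemma geomSum_zero : geomSum β 0 = 0 := Finset.sum_range_zero _

lemma geomSum_succ : geomSum β (j + 1) = β * geomSum β j + 1 := geom_sum_succ

lemma geomSum_nonneg (hβ : 0 ≤ β) : 0 ≤ geomSum β j :=
  Finset.sum_nonneg fun i _ => pow_nonneg hβ i

lemma geomSum_strictMono (hβ : 0 < β) : StrictMono (geomSum β) :=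
  strictMono_nat_of_lt_succ fun j => by
    simpa [geomSum, Finset.sum_range_succ] using pow_pos hβ j

lemma pow_eq_geomSum_iff : β ^ k = geomSum β k ↔ (2 - β) * geomSum β k = 1 := by
  have h : geomSum β k * (β - 1) = β ^ k - 1 := geom_sum_mul β k
  constructor <;> intro h' <;> linear_combination (-1 : ℝ) * h' - h

lemma two_le_of_two_sub_mul_geomSum_eq_one (hβ : β ≠ 1) (h : (2 - β) * geomSum β k = 1) :
    2 ≤ k := by
  rcases k with _ | _ | k
  · simp [geomSum_zero] at h
  · exact absurd (by simp [geomSum] at h; linarith) hβ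
  · omega

lemma exists_pos_lt_mul_lt_one {K : Type*} [Field K] [LinearOrder K] [IsStrictOrderedRing K]
    {c s : K} (hc : 0 < c) (hs : 0 ≤ s) :
    ∃ ε, 0 < ε ∧ ε < c ∧ ε * s < 1 := by
  obtain ⟨δ, hδ, hδs⟩ := exists_pos_mul_lt one_pos s
  refine ⟨min δ (c / 2), by positivity, (min_le_right _ _).trans_lt (half_lt_self hc), ?_⟩
  nlinarith [min_le_left δ (c / 2)]

lemma lowerOrbit_succ : lowerOrbit β a (j + 1) = β * lowerOrbit β a j + a := by
  simp only [lowerOrbit, geomSum_succ]; ring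

lemma upperOrbit_succ : upperOrbit β a (j + 1) = β * upperOrbit β a j + a - 1 := by
  simp only [upperOrbit, geomSum_succ]; ring

lemma lowerOrbit_eq_upperOrbit_iff :
    lowerOrbit β a j = upperOrbit β a j ↔ (2 - β) * geomSum β j = 1 := by
  simp only [lowerOrbit, upperOrbit]
  constructor <;> intro h <;> linarith

lemma mul_add_eq_one_of_eq_c (hβ : β ≠ 0) {x : ℝ} (hx : x = (1 - a) / β) : β * x + a = 1 := by
  rw [hx]; field_simp; ring

lemma Tpos_of_lt_one (hβ : β ≠ 0) {x : ℝ} (h0 : 0 ≤ β * x + a) (h1 : β * x + a < 1) :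
    Tpos β a x = β * x + a := by
  rw [Tpos, if_neg fun hx => h1.ne (mul_add_eq_one_of_eq_c hβ hx)]
  exact Int.fract_eq_self.2 ⟨h0, h1⟩

lemma Tneg_of_one_lt (hβ : β ≠ 0) {x : ℝ} (h1 : 1 < β * x + a) (h2 : β * x + a < 2) :
    Tneg β a x = β * x + a - 1 := by
  rw [Tneg, if_neg fun hx => h1.ne' (mul_add_eq_one_of_eq_c hβ hx)]
  rw [← Int.fract_sub_one, Int.fract_eq_self]
  constructor <;> linarith

lemma kPlus_zero : kPlus β a 0 = true := by simp [kPlus, tauPos]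

lemma kMinus_zero : kMinus β a 0 = false := by simp [kMinus, tauNeg]

lemma kPlus_succ_eq_false_iff (hβ : 0 < β) (hu : (Tpos β a)^[j] 0 = lowerOrbit β a j) :
    kPlus β a (j + 1) = false ↔ lowerOrbit β a (j + 1) < 1 := by
  have hc : Tpos β a ((1 - a) / β) = 0 := if_pos rfl
  simp only [kPlus, tauPos, Function.iterate_succ_apply, hc, hu, lowerOrbit_succ,
    lt_div_iff₀ hβ, Bool.ite_eq_false_distrib, Bool.true_eq_false, if_false_right, and_true]
  constructor <;> intro h <;> linarith

lemma kMinus_succ_eq_true_iff (hβ : 0 < β) (hv : (Tneg β a)^[j] 1 = upperOrbit β a j) :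
    kMinus β a (j + 1) = true ↔ 0 < upperOrbit β a (j + 1) := by
  have hc : Tneg β a ((1 - a) / β) = 1 := if_pos rfl
  simp only [kMinus, tauNeg, Function.iterate_succ_apply, hc, hv, upperOrbit_succ,
    le_div_iff₀ hβ, Bool.ite_eq_true_distrib, Bool.false_eq_true, if_false_left, and_true, not_le]
  constructor <;> intro h <;> linarith

namespace GeomOrbits

lemma zero : GeomOrbits β a 0 := by simp [GeomOrbits, lowerOrbit, upperOrbit, geomSum_zero]

lemma succ (hβ : 0 < β) (ha : a ∈ Set.Ioo 0 (2 - β)) (h : GeomOrbits β a j)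
    (hlow : lowerOrbit β a (j + 1) < 1) (hup : 0 < upperOrbit β a (j + 1)) :
    GeomOrbits β a (j + 1) := by
  have hS : 0 ≤ geomSum β j := geomSum_nonneg hβ.le
  have hlow₀ : 0 ≤ lowerOrbit β a (j + 1) := mul_nonneg ha.1.le (geomSum_nonneg hβ.le)
  have hup₁ : upperOrbit β a (j + 1) < 1 := by
    have hb : 0 < 2 - β - a := by linarith [ha.2]
    simp only [upperOrbit, geomSum_succ]; nlinarith [mul_nonneg hβ.le hS]
  rw [lowerOrbit_succ] at hlow hlow₀
  rw [upperOrbit_succ] at hup hup₁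
  constructor
  · rw [Function.iterate_succ_apply', h.1, Tpos_of_lt_one hβ.ne' hlow₀ hlow, lowerOrbit_succ]
  · rw [Function.iterate_succ_apply', h.2, Tneg_of_one_lt hβ.ne' (by linarith) (by linarith),
      upperOrbit_succ]

lemma iterate_eq_iff (h : GeomOrbits β a j) :
    (Tpos β a)^[j] 0 = (Tneg β a)^[j] 1 ↔ (2 - β) * geomSum β j = 1 := by
  rw [h.1, h.2, lowerOrbit_eq_upperOrbit_iff]

end GeomOrbits

lemma HasMatching.iterate_matchingTime (h : HasMatching β a) :
    (Tpos β a)^[matchingTime β a] 0 = (Tneg β a)^[matchingTime β a] 1 :=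
  Nat.sInf_mem h

lemma matchingTime_eq (hk : (Tpos β a)^[k] 0 = (Tneg β a)^[k] 1)
    (hlt : ∀ j < k, (Tpos β a)^[j] 0 ≠ (Tneg β a)^[j] 1) : matchingTime β a = k :=
  le_antisymm (Nat.sInf_le hk)
    (not_lt.1 fun h => hlt _ h (HasMatching.iterate_matchingTime ⟨k, hk⟩))

lemma orbit_bounds_of_multinacci (hβ : 0 < β) (ha : a ∈ Set.Ioo 0 (2 - β))
    (hk : (2 - β) * geomSum β k = 1) (hj : j ≤ k) :
    lowerOrbit β a j < 1 ∧ 0 < upperOrbit β a j := by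
  have hSk : 0 < geomSum β k := by
    by_contra! h
    nlinarith [ha.1, ha.2]
  have hSj : geomSum β j ≤ geomSum β k := (geomSum_strictMono hβ).monotone hj
  obtain ⟨ha₀, ha₂⟩ := ha
  constructor
  · calc lowerOrbit β a j ≤ a * geomSum β k := mul_le_mul_of_nonneg_left hSj ha₀.le
      _ < (2 - β) * geomSum β k := mul_lt_mul_of_pos_right ha₂ hSk
      _ = 1 := hk
  · have : (2 - β - a) * geomSum β j < 1 :=
      calc (2 - β - a) * geomSum β j ≤ (2 - β - a) * geomSum β k :=
            mul_le_mul_of_nonneg_left hSj (by linarith)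
        _ < (2 - β) * geomSum β k := mul_lt_mul_of_pos_right (by linarith) hSk
        _ = 1 := hk
    simp only [upperOrbit]; linarith

lemma geomOrbits_of_multinacci (hβ : 0 < β) (ha : a ∈ Set.Ioo 0 (2 - β))
    (hk : (2 - β) * geomSum β k = 1) : ∀ j ≤ k, GeomOrbits β a j
  | 0, _ => .zero
  | j + 1, hj =>
    have hbounds := orbit_bounds_of_multinacci hβ ha hk hj
    (geomOrbits_of_multinacci hβ ha hk j (by omega)).succ hβ ha hbounds.1 hbounds.2

lemma kneading_of_multinacci (hβ : 0 < β) (ha : a ∈ Set.Ioo 0 (2 - β))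
    (hk : (2 - β) * geomSum β k = 1) {i : ℕ} (hi : i ≤ k) :
    kPlus β a i = decide (i = 0) ∧ kMinus β a i = !decide (i = 0) := by
  rcases i with _ | j
  · exact ⟨kPlus_zero, kMinus_zero⟩
  · have horbits := geomOrbits_of_multinacci hβ ha hk j (by omega)
    have hbounds := orbit_bounds_of_multinacci hβ ha hk hi
    simp only [Nat.add_one_ne_zero, decide_false, Bool.not_false]
    exact ⟨(kPlus_succ_eq_false_iff hβ horbits.1).2 hbounds.1,
      (kMinus_succ_eq_true_iff hβ horbits.2).2 hbounds.2⟩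

lemma matchingTime_of_multinacci (hβ : 0 < β) (ha : a ∈ Set.Ioo 0 (2 - β))
    (hk : (2 - β) * geomSum β k = 1) : HasMatching β a ∧ matchingTime β a = k := by
  have hmatch : (Tpos β a)^[k] 0 = (Tneg β a)^[k] 1 :=
    (geomOrbits_of_multinacci hβ ha hk k le_rfl).iterate_eq_iff.2 hk
  refine ⟨⟨k, hmatch⟩, matchingTime_eq hmatch fun j hj => ?_⟩
  rw [Ne, (geomOrbits_of_multinacci hβ ha hk j hj.le).iterate_eq_iff, ← hk]
  have : 0 < 2 - β := ha.1.trans ha.2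
  exact (mul_lt_mul_of_pos_left (geomSum_strictMono hβ hj) this).ne

theorem matchInterval_eq_Ioo_of_multinacci (hβ : 0 < β) (hα : α ∈ Set.Ioo 0 (2 - β))
    (hk : (2 - β) * geomSum β k = 1) : matchInterval β α = Set.Ioo 0 (2 - β) := by
  refine Set.Subset.antisymm (fun _ ha => ha.1) fun a ha => ⟨ha, ?_⟩
  obtain ⟨hmα, htα⟩ := matchingTime_of_multinacci hβ hα hk
  obtain ⟨hma, hta⟩ := matchingTime_of_multinacci hβ ha hk
  refine ⟨hmα, hma, htα.trans hta.symm, fun i hi => ?_⟩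
  rw [htα] at hi
  rw [(kneading_of_multinacci hβ hα hk hi).1, (kneading_of_multinacci hβ ha hk hi).1,
    (kneading_of_multinacci hβ hα hk hi).2, (kneading_of_multinacci hβ ha hk hi).2]
  exact ⟨rfl, rfl⟩

lemma geomOrbits_of_matchInterval_eq (hβ : 0 < β) (h : matchInterval β α = Set.Ioo 0 (2 - β)) :
    ∀ j ≤ matchingTime β α, ∀ a ∈ Set.Ioo 0 (2 - β), GeomOrbits β a j := by
  have hsame : ∀ a ∈ Set.Ioo 0 (2 - β), ∀ i ≤ matchingTime β α,
      kPlus β α i = kPlus β a i ∧ kMinus β α i = kMinus β a i :=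
    fun a ha => (h.symm ▸ ha : a ∈ matchInterval β α).2.2.2.2
  intro j
  induction j with
  | zero => exact fun _ _ _ => .zero
  | succ j ih =>
    intro hj a ha
    replace ih := ih (by omega)
    -- the digits of `α` at `j + 1` are read off at parameters close to `0` and to `2 - β`
    obtain ⟨ε, hε₀, hε, hεS⟩ :=
      exists_pos_lt_mul_lt_one (ha.1.trans ha.2) (geomSum_nonneg hβ.le (j := j + 1))
    have hεmem : ε ∈ Set.Ioo 0 (2 - β) := ⟨hε₀, hε⟩
    have hε'mem : 2 - β - ε ∈ Set.Ioo 0 (2 - β) := ⟨by linarith, by linarith⟩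
    have hplus : kPlus β α (j + 1) = false := by
      rw [(hsame ε hεmem _ hj).1, kPlus_succ_eq_false_iff hβ (ih ε hεmem).1]
      exact hεS
    have hminus : kMinus β α (j + 1) = true := by
      rw [(hsame _ hε'mem _ hj).2, kMinus_succ_eq_true_iff hβ (ih _ hε'mem).2, upperOrbit,
        show 2 - β - (2 - β - ε) = ε by ring]
      linarith
    rw [(hsame a ha _ hj).1, kPlus_succ_eq_false_iff hβ (ih a ha).1] at hplus
    rw [(hsame a ha _ hj).2, kMinus_succ_eq_true_iff hβ (ih a ha).2] at hminus
    exact (ih a ha).succ hβ ha hplus hminus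

lemma two_sub_mul_geomSum_matchingTime (hβ : 0 < β) (hβ₂ : β < 2)
    (h : matchInterval β α = Set.Ioo 0 (2 - β)) :
    (2 - β) * geomSum β (matchingTime β α) = 1 := by
  have ha : (2 - β) / 2 ∈ Set.Ioo 0 (2 - β) := ⟨by linarith, by linarith⟩
  obtain ⟨-, hmatch, htime, -⟩ := (h.symm ▸ ha : _ ∈ matchInterval β α).2
  rw [← (geomOrbits_of_matchInterval_eq hβ h _ le_rfl _ ha).iterate_eq_iff, htime]
  exact hmatch.iterate_matchingTime

theorem matchInterval_full_iff_multinacci (β α : ℝ)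
    (hβ : β ∈ Set.Ioo (1 : ℝ) 2) (hα : α ∈ Set.Ioo (0 : ℝ) (2 - β)) :
    matchInterval β α = Set.Ioo (0 : ℝ) (2 - β) ↔
      ∃ k : ℕ, 2 ≤ k ∧ β ^ k = ∑ i ∈ Finset.range k, β ^ i := by
  obtain ⟨hβ₁, hβ₂⟩ := hβ
  have hβ₀ : 0 < β := one_pos.trans hβ₁
  constructor
  · intro h
    have hn := two_sub_mul_geomSum_matchingTime hβ₀ hβ₂ h
    exact ⟨_, two_le_of_two_sub_mul_geomSum_eq_one hβ₁.ne' hn, pow_eq_geomSum_iff.2 hn⟩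
  · rintro ⟨k, -, hk⟩
    exact matchInterval_eq_Ioo_of_multinacci hβ₀ hα (pow_eq_geomSum_iff.1 hk)
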